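/- In M: (1) for all n, k with 0 < k ≤ n, the elements xⁿy^{k−1} and xⁿyᵏ lie in the same strongly connected component of the right Cayley graph, i.e., there exist u, v ∈ M with xⁿy^{k−1}·u = xⁿyᵏ and xⁿyᵏ·v = xⁿy^{k−1}; (2) for all n, k, j with 0 ≤ n < k and 0 < j ≤ k, there exist u, v ∈ M with xⁿyᵏx^{j−1}·u = xⁿyᵏxʲ and xⁿyᵏxʲ·v = xⁿyᵏx^{j−1}. -/

import Mathlib

/-- The formal inverse of a word over `{x, y}` (with `x = true`, `y = false`):
reverse the word and interchange the two letters. -/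
def winv (w : FreeMonoid Bool) : FreeMonoid Bool :=
  FreeMonoid.ofList ((FreeMonoid.toList w).reverse.map Bool.not)

/-- The defining relations of the free monogenic inverse monoid. -/
inductive FIMRel1 : FreeMonoid Bool → FreeMonoid Bool → Prop
  | idem (w : FreeMonoid Bool) : FIMRel1 (w * winv w * w) w
  | comm (w z : FreeMonoid Bool) :
      FIMRel1 (w * winv w * (z * winv z)) (z * winv z * (w * winv w))

/-- The free monogenic inverse monoid. -/
abbrev FIM1 := (conGen FIMRel1).Quotient

/-- The generator `x` of the free monogenic inverse monoid. -/
def mx : FIM1 := (conGen FIMRel1).mk' (FreeMonoid.of true)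

/-- The (generalized) inverse `y` of the generator. -/
def my : FIM1 := (conGen FIMRel1).mk' (FreeMonoid.of false)

lemma winv_mul (u v : FreeMonoid Bool) : winv (u * v) = winv v * winv u := by
  simp [winv]

lemma winv_of (b : Bool) : winv (FreeMonoid.of b) = FreeMonoid.of (!b) := by
  simp [winv]

lemma winv_one : winv 1 = 1 := rfl

lemma winv_pow_of (b : Bool) : ∀ a : ℕ, winv ((FreeMonoid.of b) ^ a) = (FreeMonoid.of (!b)) ^ a := by
  intro a
  induction a with
  | zero => simp [winv_one]
  | succ n ih => rw [pow_succ, winv_mul, ih, winv_of, pow_succ']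

lemma rel_of {a b : FreeMonoid Bool} (h : FIMRel1 a b) :
    (conGen FIMRel1).mk' a = (conGen FIMRel1).mk' b :=
  (Con.eq _).mpr (ConGen.Rel.of a b h)

noncomputable abbrev π : FreeMonoid Bool →* FIM1 := (conGen FIMRel1).mk'

lemma idem_comm (w z : FreeMonoid Bool) :
    π (w * winv w) * π (z * winv z) = π (z * winv z) * π (w * winv w) := by
  rw [← map_mul, ← map_mul]
  exact rel_of (FIMRel1.comm w z)

lemma key {N : Type*} [Monoid N] (x y e : N)
    (hc : e * (y * x) = (y * x) * e) (hx : x * y * x = x) :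
    x * e * (y * x) = x * e := by
  calc x * e * (y * x) = x * (e * (y * x)) := by rw [mul_assoc]
    _ = x * ((y * x) * e) := by rw [hc]
    _ = (x * y * x) * e := by rw [← mul_assoc, ← mul_assoc]
    _ = x * e := by rw [hx]

lemma mx_pow (a : ℕ) : mx ^ a = π ((FreeMonoid.of true) ^ a) := (map_pow π _ a)
lemma my_pow (a : ℕ) : my ^ a = π ((FreeMonoid.of false) ^ a) := (map_pow π _ a)

lemma hcomm1 (a : ℕ) :
    (mx ^ a * my ^ a) * (my * mx) = (my * mx) * (mx ^ a * my ^ a) := by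
  have h := idem_comm ((FreeMonoid.of true) ^ a) (FreeMonoid.of false)
  rw [winv_pow_of, winv_of] at h
  have hp : ∀ b : Bool, ((FreeMonoid.of b ^ a : FreeMonoid Bool) : FIM1) = ((FreeMonoid.of b : FreeMonoid Bool) : FIM1) ^ a :=
    fun b => map_pow π _ a
  simpa [map_mul, mx_pow, my_pow, mx, my, hp] using h

lemma hxyx : mx * my * mx = mx := by
  have h := rel_of (FIMRel1.idem (FreeMonoid.of true))
  rw [winv_of] at h
  simpa [map_mul, mx, my] using h

lemma lem1 (m a : ℕ) : mx ^ (m + a + 1) * my ^ (a + 1) * mx = mx ^ (m + a + 1) * my ^ a := by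
  have hk := key mx my (mx ^ a * my ^ a) (hcomm1 a) hxyx
  have e : mx ^ (m + a + 1) = mx ^ m * mx * mx ^ a := by
    rw [show m + a + 1 = (m + 1) + a from by omega, pow_add, pow_succ]
  rw [e, pow_succ]
  calc mx ^ m * mx * mx ^ a * (my ^ a * my) * mx
      = mx ^ m * (mx * (mx ^ a * my ^ a) * (my * mx)) := by
        simp [mul_assoc]
    _ = mx ^ m * (mx * (mx ^ a * my ^ a)) := by rw [hk]
    _ = mx ^ m * mx * mx ^ a * my ^ a := by simp [mul_assoc]

lemma hcomm2 (a : ℕ) :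
    (my ^ a * mx ^ a) * (mx * my) = (mx * my) * (my ^ a * mx ^ a) := by
  have h := idem_comm ((FreeMonoid.of false) ^ a) (FreeMonoid.of true)
  rw [winv_pow_of, winv_of] at h
  have hp : ∀ b : Bool, ((FreeMonoid.of b ^ a : FreeMonoid Bool) : FIM1) = ((FreeMonoid.of b : FreeMonoid Bool) : FIM1) ^ a :=
    fun b => map_pow π _ a
  simpa [map_mul, mx_pow, my_pow, mx, my, hp] using h

lemma hyxy : my * mx * my = my := by
  have h := rel_of (FIMRel1.idem (FreeMonoid.of false))
  rw [winv_of] at h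
  simpa [map_mul, mx, my] using h

lemma lem2 (m a : ℕ) : my ^ (m + a + 1) * mx ^ (a + 1) * my = my ^ (m + a + 1) * mx ^ a := by
  have hk := key my mx (my ^ a * mx ^ a) (hcomm2 a) hyxy
  have e : my ^ (m + a + 1) = my ^ m * my * my ^ a := by
    rw [show m + a + 1 = (m + 1) + a from by omega, pow_add, pow_succ]
  rw [e, pow_succ]
  calc my ^ m * my * my ^ a * (mx ^ a * mx) * my
      = my ^ m * (my * (my ^ a * mx ^ a) * (mx * my)) := by
        simp [mul_assoc]
    _ = my ^ m * (my * (my ^ a * mx ^ a)) := by rw [hk]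
    _ = my ^ m * my * my ^ a * mx ^ a := by simp [mul_assoc]

/-- (1) For `0 < k ≤ n`, the elements `xⁿy^{k−1}` and `xⁿyᵏ` lie in the same
strongly connected component of the right Cayley graph of `M`;
(2) likewise for `xⁿyᵏx^{j−1}` and `xⁿyᵏxʲ` when `0 ≤ n < k` and `0 < j ≤ k`. -/
theorem strong_edges_scc :
    (∀ n k : ℕ, 0 < k → k ≤ n →
      (∃ u : FIM1, mx ^ n * my ^ (k - 1) * u = mx ^ n * my ^ k) ∧
      (∃ v : FIM1, mx ^ n * my ^ k * v = mx ^ n * my ^ (k - 1))) ∧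
    (∀ n k j : ℕ, n < k → 0 < j → j ≤ k →
      (∃ u : FIM1, mx ^ n * my ^ k * mx ^ (j - 1) * u = mx ^ n * my ^ k * mx ^ j) ∧
      (∃ v : FIM1, mx ^ n * my ^ k * mx ^ j * v = mx ^ n * my ^ k * mx ^ (j - 1))) := by
  constructor
  · intro n k hk hkn
    constructor
    · exact ⟨my, by rw [mul_assoc, ← pow_succ, Nat.sub_add_cancel hk]⟩
    · refine ⟨mx, ?_⟩
      have h := lem1 (n - k) (k - 1)
      rw [show n - k + (k - 1) + 1 = n from by omega,
        show k - 1 + 1 = k from by omega] at h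
      exact h
  · intro n k j hnk hj hjk
    constructor
    · exact ⟨mx, by rw [mul_assoc, ← pow_succ, Nat.sub_add_cancel hj]⟩
    · refine ⟨my, ?_⟩
      have h := lem2 (k - j) (j - 1)
      rw [show k - j + (j - 1) + 1 = k from by omega,
        show j - 1 + 1 = j from by omega] at h
      calc mx ^ n * my ^ k * mx ^ j * my = mx ^ n * (my ^ k * mx ^ j * my) := by
            simp [mul_assoc]
        _ = mx ^ n * (my ^ k * mx ^ (j - 1)) := by rw [h]
        _ = mx ^ n * my ^ k * mx ^ (j - 1) := by rw [mul_assoc]
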